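/- arXiv:2212.11038 — 4 statements merged into one kernel-verified Lean document; each statement's English description precedes it below -/
import Mathlib

section
/- Let $K/\mathbb{Q}$ be a Galois extension of degree $d$ with ring of integers $\mathfrak{o}_K$. The linear map sending a symmetric coefficient tuple $(c_{i,j,\tau,\tau'})$ (with $c_{i,j,\tau,\tau'}=c_{j,i,\tau',\tau}$, coefficients in $\mathbb{Q}$ components with respect to a fixed $\mathbb{Z}$-basis of $\mathfrak{o}_K$) of a generalised quadratic form in $n$ variables to the coefficient tuple $(\beta_{p,l,i,m,j})$ of its descended system of $d$ rational quadratic forms in $dn$ variables is injective; consequently there is a bijection between generalised quadratic forms in $n$ variables over $K$ and systems of $d$ rational quadratic forms in $dn$ variables. -/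
/-!
Fix `i, j` and let `D τ τ' = c i j τ τ' - c' i j τ τ'`. Since the trace pairing with the dual
basis `ρ` recovers coordinates, equality of the descended coefficients says that
`∑ τ τ', D τ τ' * τ (ω l) * τ' (ω m) = 0` for all `l, m`. Fixing `m`, this is a vanishing
`K`-linear combination of the automorphisms `τ`, evaluated on a basis, so by Dedekind's
independence of characters every coefficient `∑ τ', D τ τ' * τ' (ω m)` vanishes; a second
application of the same argument gives `D = 0`.
-/

section TraceDual

variable {F L ι : Type*} [CommRing F] [CommRing L] [Algebra F L] [Fintype ι] [DecidableEq ι]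

theorem Module.Basis.repr_eq_trace_mul_of_isDual (ω : Module.Basis ι F L) (ρ : ι → L)
    (hdual : ∀ p k, Algebra.trace F L (ρ p * ω k) = if p = k then 1 else 0) (x : L) (p : ι) :
    ω.repr x p = Algebra.trace F L (ρ p * x) := by
  conv_rhs => rw [← ω.sum_repr x]
  simp only [Finset.mul_sum, mul_smul_comm, map_sum, map_smul, hdual, smul_eq_mul, mul_ite,
    mul_one, mul_zero, Finset.sum_ite_eq, Finset.mem_univ, if_true]

theorem Module.Basis.eq_zero_of_trace_mul_eq_zero (ω : Module.Basis ι F L) (ρ : ι → L)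
    (hdual : ∀ p k, Algebra.trace F L (ρ p * ω k) = if p = k then 1 else 0) {x : L}
    (h : ∀ p, Algebra.trace F L (ρ p * x) = 0) : x = 0 :=
  ω.repr.injective <| by
    ext p
    rw [ω.repr_eq_trace_mul_of_isDual ρ hdual, h, map_zero, Finsupp.zero_apply]

end TraceDual

section CharacterIndependence

variable {F L ι : Type*} [CommSemiring F] [CommRing L] [IsDomain L] [Algebra F L]
  [Fintype (L ≃ₐ[F] L)]

theorem AlgEquiv.eq_zero_of_sum_mul_apply_basis_eq_zero (ω : Module.Basis ι F L)
    {g : (L ≃ₐ[F] L) → L} (h : ∀ l, ∑ σ : L ≃ₐ[F] L, g σ * σ (ω l) = 0) : g = 0 := by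
  have hli : LinearIndependent L fun σ : L ≃ₐ[F] L => (σ : L →ₐ[F] L).toLinearMap :=
    (linearIndependent_algHom_toLinearMap F L L).comp _ AlgEquiv.coe_toAlgHom_injective
  have hsum : ∑ σ : L ≃ₐ[F] L, g σ • (σ : L →ₐ[F] L).toLinearMap = 0 :=
    ω.ext fun l => by simpa using h l
  exact funext (Fintype.linearIndependent_iff.mp hli g hsum)

theorem AlgEquiv.eq_zero_of_sum_sum_mul_apply_basis_eq_zero (ω : Module.Basis ι F L)
    {D : (L ≃ₐ[F] L) → (L ≃ₐ[F] L) → L}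
    (h : ∀ l m, ∑ τ : L ≃ₐ[F] L, ∑ τ' : L ≃ₐ[F] L, D τ τ' * τ (ω l) * τ' (ω m) = 0) :
    D = 0 := by
  have hinner : ∀ m τ, ∑ τ' : L ≃ₐ[F] L, D τ τ' * τ' (ω m) = 0 := fun m =>
    congrFun <| eq_zero_of_sum_mul_apply_basis_eq_zero ω fun l => by
      rw [← h l m]
      simp only [Finset.sum_mul, mul_right_comm]
  funext τ
  exact eq_zero_of_sum_mul_apply_basis_eq_zero ω (hinner · τ)

end CharacterIndependence

theorem descended_system_injective_general
    (K : Type*) [Field K] [NumberField K]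
    (d n : ℕ)
    (ω : Module.Basis (Fin d) ℚ K) (ρ : Fin d → K)
    (hdual : ∀ p k : Fin d,
      Algebra.trace ℚ K (ρ p * ω k) = if p = k then 1 else 0)
    (c c' : Fin n → Fin n → (K ≃ₐ[ℚ] K) → (K ≃ₐ[ℚ] K) → K)
    (hβ : ∀ (p l m' : Fin d) (i j : Fin n),
      Algebra.trace ℚ K (ρ p *
        ∑ τ : K ≃ₐ[ℚ] K, ∑ τ' : K ≃ₐ[ℚ] K, c i j τ τ' * τ (ω l) * τ' (ω m')) =
      Algebra.trace ℚ K (ρ p *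
        ∑ τ : K ≃ₐ[ℚ] K, ∑ τ' : K ≃ₐ[ℚ] K, c' i j τ τ' * τ (ω l) * τ' (ω m'))) :
    c = c' := by
  funext i j
  rw [← sub_eq_zero]
  refine AlgEquiv.eq_zero_of_sum_sum_mul_apply_basis_eq_zero ω fun l m =>
    ω.eq_zero_of_trace_mul_eq_zero ρ hdual fun p => ?_
  simp only [Pi.sub_apply, sub_mul, Finset.sum_sub_distrib, mul_sub, map_sub, hβ p l m i j,
    sub_self]

/-- Let `K/ℚ` be a Galois extension of degree `d`, with a basis
`ω : Fin d → K` of `K/ℚ` (a `ℤ`-basis of the ring of integers) and dual basis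
`ρ : Fin d → K` with respect to the trace form.  The linear map sending a
symmetric coefficient tuple `(c i j τ τ')` of a generalised quadratic form in
`n` variables to the coefficient tuple
`β p l i m' j = Tr(ρ p * ∑ τ τ', c i j τ τ' * τ (ω l) * τ' (ω m'))`
of its descended system of `d` rational quadratic forms in `d * n` variables is
injective; consequently generalised quadratic forms are in bijection with
systems of `d` rational quadratic forms in `d * n` variables. -/
theorem descended_system_injective
    (K : Type*) [Field K] [NumberField K] [IsGalois ℚ K]
    (d n : ℕ) (hd : Module.finrank ℚ K = d)
    (ω : Module.Basis (Fin d) ℚ K) (ρ : Fin d → K)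
    (hdual : ∀ p k : Fin d,
      Algebra.trace ℚ K (ρ p * ω k) = if p = k then 1 else 0)
    (c c' : Fin n → Fin n → (K ≃ₐ[ℚ] K) → (K ≃ₐ[ℚ] K) → K)
    (hsym : ∀ i j τ τ', c i j τ τ' = c j i τ' τ)
    (hsym' : ∀ i j τ τ', c' i j τ τ' = c' j i τ' τ)
    (hβ : ∀ (p l m' : Fin d) (i j : Fin n),
      Algebra.trace ℚ K (ρ p *
        ∑ τ : K ≃ₐ[ℚ] K, ∑ τ' : K ≃ₐ[ℚ] K, c i j τ τ' * τ (ω l) * τ' (ω m')) =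
      Algebra.trace ℚ K (ρ p *
        ∑ τ : K ≃ₐ[ℚ] K, ∑ τ' : K ≃ₐ[ℚ] K, c' i j τ τ' * τ (ω l) * τ' (ω m'))) :
    c = c' :=
  descended_system_injective_general K d n ω ρ hdual c c' hβ
end

section
/- Let $K$ be a number field with ring of integers $\mathfrak{o}$, different ideal $\mathfrak{d}$, and $\psi(\cdot)=\exp(2\pi i\,\mathrm{Tr}_{K/\mathbb{Q}}(\cdot))$. Let $\gamma\in K$ and let $\mathfrak{b}\subsetneq\mathfrak{o}$ be an integral ideal. Then $x\mapsto\psi(\gamma x)$ is a non-trivial primitive additive character modulo $\mathfrak{b}$ if and only if the denominator ideal $\mathfrak{a}_\gamma=\{\alpha\in\mathfrak{o}:\alpha\gamma\in\mathfrak{o}\}$ satisfies $\mathfrak{a}_\gamma=\mathfrak{b}\mathfrak{e}$ for some integral ideal $\mathfrak{e}\mid\mathfrak{d}$ with $\mathfrak{d}\mathfrak{e}^{-1}+\mathfrak{b}=\mathfrak{o}$. -/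
open NumberField Complex

/-- The additive character `x ↦ exp(2πi Tr_{K/ℚ}(γ x))` on the ring of integers. -/
noncomputable def psiChar (K : Type*) [Field K] [NumberField K] (γ : K)
    (x : 𝓞 K) : ℂ :=
  Complex.exp (2 * Real.pi * Complex.I * ((Algebra.trace ℚ K (γ * (x : K)) : ℚ) : ℂ))

/-- `σ : 𝓞 K → ℂ` is invariant under translation by the ideal `𝔟`. -/
def IsCharMod {K : Type*} [Field K] [NumberField K] (𝔟 : Ideal (𝓞 K))
    (σ : 𝓞 K → ℂ) : Prop :=
  ∀ x z : 𝓞 K, z ∈ 𝔟 → σ (x + z) = σ x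

/-- `σ` is a primitive character modulo `𝔟`: it is a character modulo `𝔟` but
not modulo any proper divisor of `𝔟`. -/
def IsPrimitiveCharMod {K : Type*} [Field K] [NumberField K] (𝔟 : Ideal (𝓞 K))
    (σ : 𝓞 K → ℂ) : Prop :=
  IsCharMod 𝔟 σ ∧ ∀ 𝔟₁ : Ideal (𝓞 K), 𝔟₁ ∣ 𝔟 → 𝔟₁ ≠ 𝔟 → ¬ IsCharMod 𝔟₁ σ

/-!
`x ↦ ψ(γx)` is a character modulo `𝔟₁` iff `γ𝔟₁` lies in the dual `𝔡⁻¹` of `𝔬`, i.e. iff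
`𝔟₁ ⊆ (𝔞_γ : 𝔡)`. So the moduli of the character are exactly the multiples of the colon ideal
`(𝔞_γ : 𝔡)`, and the character is non-trivial and primitive modulo `𝔟` iff `𝔟 = (𝔞_γ : 𝔡) ≠ 𝔬`.
In a Dedekind domain, with `𝔢 = 𝔞_γ + 𝔡`, `𝔞_γ = 𝔢𝔞'` and `𝔡 = 𝔢𝔣`, the cofactors `𝔞'` and `𝔣`
are coprime and `(𝔞_γ : 𝔡) = 𝔞'`; conversely any factorisation as in the theorem recovers `𝔞'`.
-/

namespace Ideal

variable {R : Type*} [CommRing R] [IsDedekindDomain R]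

theorem mem_colon_iff_dvd {A I : Ideal R} {z : R} :
    z ∈ A.colon (I : Set R) ↔ A ∣ span {z} * I := by
  rw [Submodule.mem_colon_iff_le, ← Submodule.ideal_span_singleton_smul, smul_eq_mul, dvd_iff_le]

theorem colon_mul_mul_eq {𝔟 𝔢 𝔣 : Ideal R} (h𝔢 : 𝔢 ≠ ⊥) (h : IsCoprime 𝔟 𝔣) :
    (𝔟 * 𝔢).colon ((𝔢 * 𝔣 : Ideal R) : Set R) = 𝔟 := by
  ext z
  rw [mem_colon_iff_dvd, show span {z} * (𝔢 * 𝔣) = span {z} * 𝔣 * 𝔢 by ring,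
    mul_dvd_mul_iff_right h𝔢, ← dvd_span_singleton]
  exact ⟨h.dvd_of_dvd_mul_right, fun h𝔟 ↦ dvd_mul_of_dvd_left h𝔟 𝔣⟩

theorem colon_eq_iff_exists_mul_eq {A 𝔡 𝔟 : Ideal R} (h𝔡 : 𝔡 ≠ ⊥) :
    A.colon (𝔡 : Set R) = 𝔟 ↔ ∃ 𝔢 𝔣 : Ideal R, 𝔢 * 𝔣 = 𝔡 ∧ 𝔣 + 𝔟 = ⊤ ∧ A = 𝔟 * 𝔢 := by
  have isCoprime_iff {𝔟 𝔣 : Ideal R} : IsCoprime 𝔟 𝔣 ↔ 𝔣 + 𝔟 = ⊤ := by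
    rw [isCoprime_comm, isCoprime_iff_add, one_eq_top]
  constructor
  · rintro rfl
    obtain ⟨𝔢, h𝔢⟩ : ∃ 𝔢, 𝔢 = A ⊔ 𝔡 := ⟨_, rfl⟩
    obtain ⟨A', rfl⟩ : 𝔢 ∣ A := dvd_iff_le.2 (h𝔢 ▸ le_sup_left)
    obtain ⟨𝔣, rfl⟩ : 𝔢 ∣ 𝔡 := dvd_iff_le.2 (h𝔢 ▸ le_sup_right)
    have h𝔢0 : 𝔢 ≠ ⊥ := left_ne_zero_of_mul h𝔡
    have hcop : IsCoprime A' 𝔣 := by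
      rw [isCoprime_iff_sup_eq, ← one_eq_top]
      refine mul_left_cancel₀ h𝔢0 ?_
      rw [mul_sup, ← h𝔢, mul_one]
    rw [mul_comm 𝔢 A', colon_mul_mul_eq h𝔢0 hcop]
    exact ⟨𝔢, 𝔣, rfl, isCoprime_iff.1 hcop, rfl⟩
  · rintro ⟨𝔢, 𝔣, rfl, h𝔣𝔟, rfl⟩
    exact colon_mul_mul_eq (left_ne_zero_of_mul h𝔡) (isCoprime_iff.2 h𝔣𝔟)

end Ideal

section NumberField

open FractionalIdeal
open scoped nonZeroDivisors

variable {K : Type*} [Field K]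

def denominatorIdeal (γ : K) : Ideal (𝓞 K) := (1 : Submodule (𝓞 K) K).colon {γ}

theorem mem_denominatorIdeal {γ : K} {α : 𝓞 K} :
    α ∈ denominatorIdeal γ ↔ ∃ β : 𝓞 K, (α : K) * γ = β := by
  rw [denominatorIdeal, Submodule.mem_colon_singleton, Submodule.mem_one, Algebra.smul_def]
  exact exists_congr fun β ↦ eq_comm

variable [NumberField K]

theorem psiChar_add (γ : K) (x z : 𝓞 K) :
    psiChar K γ (x + z) = psiChar K γ x * psiChar K γ z := by
  simp only [psiChar, ← Complex.exp_add, map_add, mul_add, Rat.cast_add]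

theorem psiChar_eq_one_iff {γ : K} {z : 𝓞 K} :
    psiChar K γ z = 1 ↔ Algebra.trace ℚ K (γ * z) ∈ (algebraMap ℤ ℚ).range := by
  rw [psiChar, Complex.exp_eq_one_iff]
  refine exists_congr fun n ↦ ?_
  rw [mul_comm (n : ℂ), mul_right_inj' (by simp [Real.pi_ne_zero]), eq_comm]
  exact_mod_cast Iff.rfl

theorem isCharMod_psiChar_iff {γ : K} {𝔟 : Ideal (𝓞 K)} :
    IsCharMod 𝔟 (psiChar K γ) ↔ ∀ z ∈ 𝔟, psiChar K γ z = 1 := by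
  refine ⟨fun h z hz ↦ ?_, fun h x z hz ↦ by rw [psiChar_add, h z hz, mul_one]⟩
  simpa [psiChar] using h 0 z hz

theorem mem_dual_one_iff {x : K} :
    x ∈ dual ℤ ℚ (1 : FractionalIdeal (𝓞 K)⁰ K) ↔
      ∀ w ∈ differentIdeal ℤ (𝓞 K), ∃ β : 𝓞 K, x * w = β := by
  rw [← inv_inv (dual ℤ ℚ _), ← coeIdeal_differentIdeal ℤ ℚ K,
    mem_inv_iff (by simpa using differentIdeal_ne_bot)]
  simp only [mem_coeIdeal, FractionalIdeal.mem_one_iff, forall_exists_index, and_imp]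
  exact ⟨fun h w hw ↦ (h _ w hw rfl).imp fun _ ↦ Eq.symm,
    fun h _ w hw hy ↦ hy ▸ (h w hw).imp fun _ ↦ Eq.symm⟩

theorem forall_psiChar_eq_one_iff {γ : K} {𝔟 : Ideal (𝓞 K)} :
    (∀ z ∈ 𝔟, psiChar K γ z = 1) ↔
      ∀ z ∈ 𝔟, γ * z ∈ dual ℤ ℚ (1 : FractionalIdeal (𝓞 K)⁰ K) := by
  simp_rw [mem_dual (one_ne_zero' (FractionalIdeal (𝓞 K)⁰ K)), FractionalIdeal.mem_one_iff,
    forall_exists_index, forall_apply_eq_imp_iff, Algebra.traceForm_apply]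
  refine ⟨fun h z hz y ↦ ?_, fun h z hz ↦ psiChar_eq_one_iff.2 (by simpa using h z hz 1)⟩
  simpa [mul_assoc] using psiChar_eq_one_iff.1 (h _ (𝔟.mul_mem_right y hz))

theorem isCharMod_psiChar_iff_le_colon {γ : K} {𝔟 : Ideal (𝓞 K)} :
    IsCharMod 𝔟 (psiChar K γ) ↔
      𝔟 ≤ (denominatorIdeal γ).colon (differentIdeal ℤ (𝓞 K) : Set (𝓞 K)) := by
  simp_rw [isCharMod_psiChar_iff, forall_psiChar_eq_one_iff, mem_dual_one_iff, SetLike.le_def,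
    Submodule.mem_colon, SetLike.mem_coe, smul_eq_mul, mem_denominatorIdeal]
  push_cast
  simp only [mul_right_comm _ γ, mul_comm γ]

theorem exists_psiChar_ne_one_iff {γ : K} :
    (∃ x, psiChar K γ x ≠ 1) ↔
      (denominatorIdeal γ).colon (differentIdeal ℤ (𝓞 K) : Set (𝓞 K)) ≠ ⊤ := by
  rw [ne_eq, ← top_le_iff, ← isCharMod_psiChar_iff_le_colon, isCharMod_psiChar_iff]
  simp

theorem isPrimitiveCharMod_iff_eq {σ : 𝓞 K → ℂ} {𝔟 𝔠 : Ideal (𝓞 K)}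
    (h : ∀ 𝔟₁, IsCharMod 𝔟₁ σ ↔ 𝔟₁ ≤ 𝔠) : IsPrimitiveCharMod 𝔟 σ ↔ 𝔠 = 𝔟 := by
  simp_rw [IsPrimitiveCharMod, h]
  constructor
  · rintro ⟨h𝔟, hprim⟩
    by_contra hne
    exact hprim 𝔠 (Ideal.dvd_iff_le.2 h𝔟) hne le_rfl
  · rintro rfl
    exact ⟨le_rfl, fun 𝔟₁ hdvd hne h𝔟₁ ↦ hne (le_antisymm h𝔟₁ (Ideal.le_of_dvd hdvd))⟩

end NumberField

/-- Let `K` be a number field with ring of integers `𝓞`,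
different ideal `𝔡` and `ψ(x) = exp(2πi Tr_{K/ℚ}(x))`.  For `γ ∈ K` and a
proper integral ideal `𝔟 ⊊ 𝓞`, the map `x ↦ ψ(γ x)` is a non-trivial primitive
additive character modulo `𝔟` if and only if the denominator ideal
`𝔞_γ = {α ∈ 𝓞 : α γ ∈ 𝓞}` satisfies `𝔞_γ = 𝔟 𝔢` for some integral ideal
`𝔢 ∣ 𝔡` with `𝔡 𝔢⁻¹` coprime to `𝔟`. -/
theorem primitiveChar_iff_denominator_eq
    (K : Type*) [Field K] [NumberField K] (γ : K) (𝔟 : Ideal (𝓞 K))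
    (h𝔟 : 𝔟 ≠ ⊤) :
    ((∃ x : 𝓞 K, psiChar K γ x ≠ 1) ∧ IsPrimitiveCharMod 𝔟 (psiChar K γ)) ↔
      ∃ 𝔢 𝔣 : Ideal (𝓞 K), 𝔢 * 𝔣 = differentIdeal ℤ (𝓞 K) ∧
        𝔣 + 𝔟 = ⊤ ∧
        (∀ α : 𝓞 K, (∃ β : 𝓞 K, (α : K) * γ = (β : K)) ↔ α ∈ 𝔟 * 𝔢) := by
  rw [exists_psiChar_ne_one_iff, isPrimitiveCharMod_iff_eq fun _ ↦ isCharMod_psiChar_iff_le_colon,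
    and_iff_right_of_imp fun h ↦ h ▸ h𝔟, Ideal.colon_eq_iff_exists_mul_eq differentIdeal_ne_bot]
  simp_rw [← mem_denominatorIdeal, ← SetLike.ext_iff]
end

section
/- Let $L$ be an algebraically closed field of characteristic $\neq 2$, $m<n$, and let $A,B\in M_{n\times n}(L)$ be symmetric with: $B$ supported in its upper-left $m\times m$ block, that block non-singular, and $\det A\neq 0$. Assume the projective intersection of the quadrics $x^tAx=0$ and $x^tBx=0$ has codimension $2$ and all of its singular points have the form $(0,\mathbf{x}'')$ with $\mathbf{x}''\in L^{n-m}$. Then $\mathrm{rank}(A+\lambda B)\geq n-1$ for every $\lambda\in L$. -/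
open Module Matrix Polynomial

/-!
If `rank (A + λB) ≤ n - 2`, the kernel of `A + λB` is at least two-dimensional, so over the
algebraically closed field `L` it contains a vector `x ≠ 0` with `xᵀBx = 0`; then also
`xᵀAx = xᵀ(A + λB)x - λ xᵀBx = 0`. Hence `x` is a singular point of the intersection, so its first
`m` coordinates vanish. As `B` lives in the upper-left block this gives `Bx = 0`, hence `Ax = 0`,
contradicting `det A ≠ 0`.
-/

theorem QuadraticMap.not_anisotropic_of_two_le_finrank {K V : Type*} [Field K] [IsAlgClosed K]
    [AddCommGroup V] [Module K V] (Q : QuadraticForm K V) (hV : 2 ≤ finrank K V) :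
    ¬ Q.Anisotropic := by
  obtain ⟨f, hf⟩ := exists_linearIndependent_of_le_finrank hV
  have hpair : ∀ s t : K, s • f 0 + t • f 1 = 0 → s = 0 ∧ t = 0 :=
    LinearIndependent.pair_iff.mp (by rwa [show ![f 0, f 1] = f by ext i; fin_cases i <;> rfl])
  intro hQ
  by_cases hv : Q (f 1) = 0
  · exact one_ne_zero (hpair 0 1 (by simp [hQ _ hv])).2
  -- `Q (f 0 + t • f 1)` is a quadratic polynomial in `t` with leading coefficient `Q (f 1)`.
  obtain ⟨t, ht⟩ := IsAlgClosed.exists_root (C (Q (f 1)) * X ^ 2 + C (polar Q (f 0) (f 1)) * X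
    + C (Q (f 0))) (by rw [degree_quadratic hv]; decide)
  have hzero : Q (f 0 + t • f 1) = 0 := by
    rw [QuadraticMap.map_add Q, QuadraticMap.map_smul, polar_smul_right]
    simp only [IsRoot, eval_add, eval_mul, eval_C, eval_pow, eval_X] at ht
    simp only [smul_eq_mul]
    linear_combination ht
  exact one_ne_zero (hpair 1 t (by simpa using hQ _ hzero)).1

theorem Matrix.toQuadraticForm'_apply {K n : Type*} [CommRing K] [Fintype n] [DecidableEq n]
    (B : Matrix n n K) (x : n → K) : B.toQuadraticForm' x = x ⬝ᵥ B *ᵥ x := by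
  simp [Matrix.toQuadraticForm', Matrix.toLinearMap₂'_apply']

theorem Matrix.rank_add_finrank_ker {K m n : Type*} [Field K] [Fintype n] [Fintype m]
    (M : Matrix m n K) : M.rank + finrank K (LinearMap.ker M.mulVecLin) = Fintype.card n := by
  rw [Matrix.rank, LinearMap.finrank_range_add_finrank_ker, finrank_fintype_fun_eq_card]

theorem Matrix.exists_ne_zero_mulVec_eq_zero_dotProduct_mulVec_eq_zero {K n : Type*} [Field K]
    [IsAlgClosed K] [Fintype n] [DecidableEq n] (M B : Matrix n n K)
    (hM : M.rank + 2 ≤ Fintype.card n) : ∃ x ≠ 0, M *ᵥ x = 0 ∧ x ⬝ᵥ B *ᵥ x = 0 := by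
  have hiso := QuadraticMap.not_anisotropic_of_two_le_finrank
    (B.toQuadraticForm'.comp (LinearMap.ker M.mulVecLin).subtype)
    (by have := M.rank_add_finrank_ker; omega)
  simp only [QuadraticMap.Anisotropic, not_forall, exists_prop] at hiso
  obtain ⟨⟨x, hMx⟩, hBx, hx⟩ := hiso
  exact ⟨x, by simpa using hx, hMx, by simpa [toQuadraticForm'_apply] using hBx⟩

theorem Matrix.mulVec_eq_zero_of_cols_vanish {R m n : Type*} [NonUnitalNonAssocSemiring R]
    [Fintype n] {B : Matrix m n R} {x : n → R} (s : Set n) (hB : ∀ i, ∀ j ∉ s, B i j = 0)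
    (hx : ∀ j ∈ s, x j = 0) : B *ᵥ x = 0 := by
  funext i
  refine Finset.sum_eq_zero fun j _ => ?_
  by_cases hj : j ∈ s
  · simp [hx j hj]
  · simp [hB i j hj]

theorem rank_pencil_ge_of_singular_locus_general
    (L : Type*) [Field L] [IsAlgClosed L]
    (n m : ℕ)
    (A B : Matrix (Fin n) (Fin n) L)
    (hBsupp : ∀ i j : Fin n, m ≤ (i : ℕ) ∨ m ≤ (j : ℕ) → B i j = 0)
    (hA : A.det ≠ 0)
    (hsing : ∀ x : Fin n → L, x ≠ 0 →
      dotProduct x (A.mulVec x) = 0 →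
      dotProduct x (B.mulVec x) = 0 →
      (∃ μ ν : L, (μ, ν) ≠ (0, 0) ∧ (μ • A + ν • B).mulVec x = 0) →
      ∀ i : Fin n, (i : ℕ) < m → x i = 0) :
    ∀ lam : L, n - 1 ≤ (A + lam • B).rank := by
  intro lam
  by_contra! hrank
  obtain ⟨x, hx, hMx, hBq⟩ := (A + lam • B).exists_ne_zero_mulVec_eq_zero_dotProduct_mulVec_eq_zero
    B (by rw [Fintype.card_fin]; omega)
  have hAq : x ⬝ᵥ A *ᵥ x = 0 := by
    have hMq : x ⬝ᵥ (A + lam • B) *ᵥ x = 0 := by rw [hMx, dotProduct_zero]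
    simpa [add_mulVec, smul_mulVec, hBq] using hMq
  have hx' := hsing x hx hAq hBq ⟨1, lam, by simp, by rwa [one_smul]⟩
  have hBx : B *ᵥ x = 0 := mulVec_eq_zero_of_cols_vanish {j | (j : ℕ) < m}
    (fun i j hj => hBsupp i j (Or.inr (not_lt.mp hj))) hx'
  have hAx : A *ᵥ x = 0 := by simpa [add_mulVec, smul_mulVec, hBx] using hMx
  exact hx (eq_zero_of_mulVec_eq_zero hA hAx)

/-- Let `L` be algebraically closed of characteristic `≠ 2`,
`m < n`, and let `A, B` be symmetric `n × n` matrices over `L` with `B`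
supported in its upper-left `m × m` block, that block non-singular, and
`det A ≠ 0`.  Assume that the intersection of the two quadrics `xᵀAx = 0`,
`xᵀBx = 0` has codimension `2` (its affine cone has Krull dimension `n - 2`)
and that all of its singular points have the form `(0, x'')`.  Then
`rank(A + λB) ≥ n - 1` for every `λ ∈ L`. -/
theorem rank_pencil_ge_of_singular_locus
    (L : Type*) [Field L] [IsAlgClosed L] (h2 : (2 : L) ≠ 0)
    (n m : ℕ) (hmn : m < n)
    (A B : Matrix (Fin n) (Fin n) L)
    (hAsymm : A.IsSymm) (hBsymm : B.IsSymm)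
    (hBsupp : ∀ i j : Fin n, m ≤ (i : ℕ) ∨ m ≤ (j : ℕ) → B i j = 0)
    (hBblock : ∀ hm : 0 < m,
      (Matrix.of (fun i j : Fin m =>
        B (Fin.castLE hmn.le i) (Fin.castLE hmn.le j))).det ≠ 0)
    (hA : A.det ≠ 0)
    (hcodim : ringKrullDim
      (MvPolynomial (Fin n) L ⧸ Ideal.span
        {(∑ i, ∑ j, MvPolynomial.C (A i j) *
            MvPolynomial.X i * MvPolynomial.X j),
         (∑ i, ∑ j, MvPolynomial.C (B i j) *
            MvPolynomial.X i * MvPolynomial.X j)}) = (n - 2 : ℕ))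
    (hsing : ∀ x : Fin n → L, x ≠ 0 →
      dotProduct x (A.mulVec x) = 0 →
      dotProduct x (B.mulVec x) = 0 →
      (∃ μ ν : L, (μ, ν) ≠ (0, 0) ∧ (μ • A + ν • B).mulVec x = 0) →
      ∀ i : Fin n, (i : ℕ) < m → x i = 0) :
    ∀ lam : L, n - 1 ≤ (A + lam • B).rank :=
  rank_pencil_ge_of_singular_locus_general L n m A B hBsupp hA hsing
end

section
/- Let $F$ be the generalised quadratic form $F(\mathbf{X})=Q(X_1,\dots,X_n)+R(X_1^{\tau},\dots,X_m^{\tau})$ over $\mathfrak{o}$, with $Q$ having non-singular symmetric matrix $\mathbf{A}$ and $R$ having non-singular $m\times m$ symmetric matrix. Then there exist non-zero constants $\kappa_1,\dots,\kappa_n,\tilde\kappa_1,\dots,\tilde\kappa_m\in K$ with $\kappa_i^{-1},\tilde\kappa_j^{-1}\in\mathfrak{o}$, depending only on $F$ and $K$, such that for every integral ideal $\mathfrak{b}$, $\mathcal{H}_\mathfrak{b}\subseteq(\kappa_1\mathfrak{b}\cap\tilde\kappa_1\mathfrak{b}^{\tau^{-1}})\times\cdots\times(\kappa_m\mathfrak{b}\cap\tilde\kappa_m\mathfrak{b}^{\tau^{-1}})\times\kappa_{m+1}\mathfrak{b}\times\cdots\times\kappa_n\mathfrak{b}$.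 -/
open NumberField
open scoped BigOperators

/-- The action of `Gal(K/ℚ)` on the ring of integers of `K`. -/
noncomputable def gact (K : Type*) [Field K] [NumberField K]
    (τ : K ≃ₐ[ℚ] K) : (𝓞 K) ≃ₐ[ℤ] (𝓞 K) :=
  galRestrict ℤ ℚ K (𝓞 K) τ

/-- The generalised bilinear form
`B(x; y) = ∑_{i,j ≤ n} a_{ij} xᵢ yⱼ + ∑_{i,j ≤ m} b_{ij} τ(xᵢ) τ(yⱼ)`
attached to the generalised quadratic form `F = Q + R ∘ τ`. -/
noncomputable def specialBil {K : Type*} [Field K] [NumberField K]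
    {n m : ℕ} (hmn : m ≤ n) (τ : K ≃ₐ[ℚ] K)
    (a : Fin n → Fin n → 𝓞 K) (b : Fin m → Fin m → 𝓞 K)
    (x y : Fin n → 𝓞 K) : 𝓞 K :=
  (∑ i, ∑ j, a i j * x i * y j) +
    ∑ i : Fin m, ∑ j : Fin m,
      b i j * gact K τ (x (Fin.castLE hmn i)) * gact K τ (y (Fin.castLE hmn j))

/-- For `F(X) = Q(X₁,…,Xₙ) + R(X₁^τ,…,X_m^τ)` with `Q` and
`R` non-singular, there exist non-zero `κ₁,…,κₙ, κ̃₁,…,κ̃_m ∈ K` with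
`κᵢ⁻¹, κ̃ⱼ⁻¹ ∈ 𝓞`, depending only on `F` and `K`, such that for every
integral ideal `𝔟` one has
`ℋ_𝔟 ⊆ (κ₁𝔟 ∩ κ̃₁𝔟^{τ⁻¹}) × ⋯ × (κ_m𝔟 ∩ κ̃_m𝔟^{τ⁻¹}) × κ_{m+1}𝔟 × ⋯ × κₙ𝔟`. -/
theorem H_subset_scaled_ideals
    (K : Type*) [Field K] [NumberField K] [IsGalois ℚ K]
    (n m : ℕ) (hm : 1 ≤ m) (hmn : m ≤ n)
    (τ : K ≃ₐ[ℚ] K) (hτ : τ ≠ 1)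
    (a : Fin n → Fin n → 𝓞 K) (b : Fin m → Fin m → 𝓞 K)
    (hasymm : ∀ i j, a i j = a j i) (hbsymm : ∀ i j, b i j = b j i)
    (hadet : (Matrix.of fun i j => ((a i j : K))).det ≠ 0)
    (hbdet : (Matrix.of fun i j => ((b i j : K))).det ≠ 0) :
    ∃ (κ : Fin n → K) (κt : Fin m → K),
      (∀ i, ∃ u : 𝓞 K, κ i * (u : K) = 1) ∧
      (∀ i, ∃ u : 𝓞 K, κt i * (u : K) = 1) ∧
      ∀ 𝔟 : Ideal (𝓞 K), ∀ h : Fin n → 𝓞 K,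
        (∀ x : Fin n → 𝓞 K, 2 * specialBil hmn τ a b x h ∈ 𝔟) →
        (∀ i : Fin n, ∃ z ∈ 𝔟, ((h i : K)) = κ i * ((z : K))) ∧
        (∀ i : Fin m, ∃ z ∈ Ideal.map (gact K τ.symm) 𝔟,
          ((h (Fin.castLE hmn i) : K)) = κt i * ((z : K))) := by
  classical
  -- an integer moved by τ
  obtain ⟨c, hc⟩ : ∃ c : 𝓞 K, gact K τ c ≠ c := by
    by_contra hall
    push_neg at hall
    apply hτ
    ext x
    obtain ⟨p, q, hq, rfl⟩ := IsFractionRing.div_surjective (A := 𝓞 K) x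
    have key : ∀ z : 𝓞 K, τ (algebraMap (𝓞 K) K z) = algebraMap (𝓞 K) K z := by
      intro z
      have := algebraMap_galRestrict_apply ℤ τ z
      rw [show galRestrict ℤ ℚ K (𝓞 K) τ z = gact K τ z from rfl, hall] at this
      exact this.symm
    simp [map_div₀, key]
  -- τ⁻¹ ∘ τ = id on integers
  have hginv : ∀ x : 𝓞 K, gact K τ.symm (gact K τ x) = x := by
    intro x
    have h1 : gact K τ.symm * gact K τ = 1 := by
      unfold gact
      rw [← (galRestrict ℤ ℚ K (𝓞 K)).map_mul]
      rw [show τ.symm * τ = 1 from inv_mul_cancel τ, map_one]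
    calc gact K τ.symm (gact K τ x) = (gact K τ.symm * gact K τ) x := rfl
    _ = x := by rw [h1]; rfl
  set δ : 𝓞 K := c - gact K τ c with hδdef
  have hδ : δ ≠ 0 := sub_ne_zero.mpr fun h0 => hc h0.symm
  have hdA : (Matrix.of a).det ≠ 0 := by
    intro h0
    apply hadet
    have e : (Matrix.of fun i j => ((a i j : K))) = (Matrix.of a).map (algebraMap (𝓞 K) K) := rfl
    rw [e, show (Matrix.of a).map (algebraMap (𝓞 K) K)
        = (algebraMap (𝓞 K) K).mapMatrix (Matrix.of a) from rfl, ← RingHom.map_det, h0, map_zero]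
  have hdB : (Matrix.of b).det ≠ 0 := by
    intro h0
    apply hbdet
    have e : (Matrix.of fun i j => ((b i j : K))) = (Matrix.of b).map (algebraMap (𝓞 K) K) := rfl
    rw [e, show (Matrix.of b).map (algebraMap (𝓞 K) K)
        = (algebraMap (𝓞 K) K).mapMatrix (Matrix.of b) from rfl, ← RingHom.map_det, h0, map_zero]
  have h2 : (2 : 𝓞 K) ≠ 0 := two_ne_zero
  set eA : 𝓞 K := 2 * (δ * (Matrix.of a).det) with heA
  set eB : 𝓞 K := gact K τ.symm (2 * (δ * (Matrix.of b).det)) with heB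
  have heA0 : eA ≠ 0 := mul_ne_zero h2 (mul_ne_zero hδ hdA)
  have heB0 : eB ≠ 0 := by
    intro h0
    have := (gact K τ.symm).injective (by rw [← heB, h0, map_zero] : gact K τ.symm _ = gact K τ.symm 0)
    exact mul_ne_zero h2 (mul_ne_zero hδ hdB) this
  have heAK : ((eA : K)) ≠ 0 := by simpa using heA0
  have heBK : ((eB : K)) ≠ 0 := by simpa using heB0
  refine ⟨fun _ => ((eA : K))⁻¹, fun _ => ((eB : K))⁻¹, fun i => ⟨eA, inv_mul_cancel₀ heAK⟩,
    fun i => ⟨eB, inv_mul_cancel₀ heBK⟩, ?_⟩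
  intro 𝔟 h hmem
  set L : Fin n → 𝓞 K := fun k => ∑ j, a k j * h j with hL
  set M : Fin m → 𝓞 K := fun k => ∑ j, b k j * gact K τ (h (Fin.castLE hmn j)) with hM
  have hfirst : ∀ (k : Fin n) (c' : 𝓞 K),
      (∑ i, ∑ j, a i j * (Pi.single k c' : Fin n → 𝓞 K) i * h j) = c' * L k := by
    intro k c'
    rw [Finset.sum_eq_single k]
    · simp only [hL, Finset.mul_sum]
      exact Finset.sum_congr rfl fun j _ => by rw [Pi.single_eq_same]; ring
    · intro i _ hik
      exact Finset.sum_eq_zero fun j _ => by rw [Pi.single_eq_of_ne hik]; ring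
    · intro hk; exact absurd (Finset.mem_univ k) hk
  have hsingle : ∀ (k₀ : Fin m) (c' : 𝓞 K),
      specialBil hmn τ a b (Pi.single (Fin.castLE hmn k₀) c') h
        = c' * L (Fin.castLE hmn k₀) + gact K τ c' * M k₀ := by
    intro k₀ c'
    unfold specialBil
    rw [hfirst]
    congr 1
    have hpt : ∀ i : Fin m,
        (Pi.single (Fin.castLE hmn k₀) c' : Fin n → 𝓞 K) (Fin.castLE hmn i) = (Pi.single k₀ c' : Fin m → 𝓞 K) i := by
      intro i
      rcases eq_or_ne i k₀ with rfl | hne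
      · simp
      · rw [Pi.single_eq_of_ne hne,
          Pi.single_eq_of_ne fun hEq => hne (Fin.castLE_injective hmn hEq)]
    simp only [hpt]
    rw [Finset.sum_eq_single k₀]
    · simp only [hM, Finset.mul_sum, Pi.single_eq_same]
      exact Finset.sum_congr rfl fun j _ => by ring
    · intro i _ hik
      exact Finset.sum_eq_zero fun j _ => by rw [Pi.single_eq_of_ne hik, map_zero]; ring
    · intro hk; exact absurd (Finset.mem_univ k₀) hk
  have hsinglehigh : ∀ (k : Fin n), m ≤ (k : ℕ) →
      specialBil hmn τ a b (Pi.single k (1 : 𝓞 K)) h = L k := by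
    intro k hk
    unfold specialBil
    rw [hfirst, one_mul]
    have : (∑ i : Fin m, ∑ j : Fin m, b i j * gact K τ ((Pi.single k (1 : 𝓞 K) : Fin n → 𝓞 K) (Fin.castLE hmn i))
        * gact K τ (h (Fin.castLE hmn j))) = 0 := by
      refine Finset.sum_eq_zero fun i _ => Finset.sum_eq_zero fun j _ => ?_
      have hne : (Fin.castLE hmn i) ≠ k := by
        intro hEq
        have := congrArg Fin.val hEq
        simp only [Fin.coe_castLE] at this
        omega
      rw [Pi.single_eq_of_ne hne, map_zero]; ring
    rw [this, add_zero]
  have hLmem : ∀ k : Fin n, δ * (2 * L k) ∈ 𝔟 := by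
    intro k
    by_cases hk : (k : ℕ) < m
    · set k₀ : Fin m := ⟨(k : ℕ), hk⟩ with hk₀
      have hkk : Fin.castLE hmn k₀ = k := rfl
      have m1 := hmem (Pi.single (Fin.castLE hmn k₀) (1 : 𝓞 K))
      have m2 := hmem (Pi.single (Fin.castLE hmn k₀) c)
      rw [hsingle k₀ 1] at m1
      rw [hsingle k₀ c] at m2
      rw [← hkk]
      have key : δ * (2 * L (Fin.castLE hmn k₀))
          = 2 * (c * L (Fin.castLE hmn k₀) + gact K τ c * M k₀)
            - gact K τ c * (2 * ((1 : 𝓞 K) * L (Fin.castLE hmn k₀) + gact K τ (1 : 𝓞 K) * M k₀)) := by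
        rw [map_one, hδdef]; ring
      rw [key]
      exact Ideal.sub_mem _ m2 (Ideal.mul_mem_left _ _ m1)
    · have m1 := hmem (Pi.single k (1 : 𝓞 K))
      rw [hsinglehigh k (le_of_not_gt hk)] at m1
      exact Ideal.mul_mem_left _ _ m1
  have hMmem : ∀ k₀ : Fin m, δ * (2 * M k₀) ∈ 𝔟 := by
    intro k₀
    have m1 := hmem (Pi.single (Fin.castLE hmn k₀) (1 : 𝓞 K))
    have m2 := hmem (Pi.single (Fin.castLE hmn k₀) c)
    rw [hsingle k₀ 1] at m1
    rw [hsingle k₀ c] at m2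
    have key : δ * (2 * M k₀)
        = c * (2 * ((1 : 𝓞 K) * L (Fin.castLE hmn k₀) + gact K τ (1 : 𝓞 K) * M k₀))
          - 2 * (c * L (Fin.castLE hmn k₀) + gact K τ c * M k₀) := by
      rw [map_one, hδdef]; ring
    rw [key]
    exact Ideal.sub_mem _ (Ideal.mul_mem_left _ _ m1) m2
  -- adjugate identities
  have hAdj : ∀ i : Fin n, ∑ k, (Matrix.of a).adjugate i k * L k = (Matrix.of a).det * h i := by
    intro i
    have h1 : ((Matrix.of a).adjugate * Matrix.of a).mulVec h = (Matrix.of a).det • h := by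
      rw [Matrix.adjugate_mul, Matrix.smul_mulVec, Matrix.one_mulVec]
    have h2 := congrFun h1 i
    rw [← Matrix.mulVec_mulVec] at h2
    simpa [Matrix.mulVec, dotProduct, hL, smul_eq_mul] using h2
  have hBdj : ∀ i : Fin m, ∑ k, (Matrix.of b).adjugate i k * M k
      = (Matrix.of b).det * gact K τ (h (Fin.castLE hmn i)) := by
    intro i
    have h1 : ((Matrix.of b).adjugate * Matrix.of b).mulVec
        (fun j => gact K τ (h (Fin.castLE hmn j))) = (Matrix.of b).det •
          (fun j => gact K τ (h (Fin.castLE hmn j))) := by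
      rw [Matrix.adjugate_mul, Matrix.smul_mulVec, Matrix.one_mulVec]
    have h2 := congrFun h1 i
    rw [← Matrix.mulVec_mulVec] at h2
    simpa [Matrix.mulVec, dotProduct, hM, smul_eq_mul] using h2
  have hzA : ∀ i : Fin n, eA * h i ∈ 𝔟 := by
    intro i
    have hid : eA * h i = ∑ k, (Matrix.of a).adjugate i k * (δ * (2 * L k)) := by
      have e1 : ∑ k, (Matrix.of a).adjugate i k * (δ * (2 * L k))
          = (2 * δ) * ∑ k, (Matrix.of a).adjugate i k * L k := by
        rw [Finset.mul_sum]
        exact Finset.sum_congr rfl fun k _ => by ring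
      rw [e1, hAdj i, heA]; ring
    rw [hid]
    exact Ideal.sum_mem _ fun k _ => Ideal.mul_mem_left _ _ (hLmem k)
  have hzB : ∀ i : Fin m, (2 * (δ * (Matrix.of b).det)) * gact K τ (h (Fin.castLE hmn i)) ∈ 𝔟 := by
    intro i
    have hid : (2 * (δ * (Matrix.of b).det)) * gact K τ (h (Fin.castLE hmn i))
        = ∑ k, (Matrix.of b).adjugate i k * (δ * (2 * M k)) := by
      have e1 : ∑ k, (Matrix.of b).adjugate i k * (δ * (2 * M k))
          = (2 * δ) * ∑ k, (Matrix.of b).adjugate i k * M k := by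
        rw [Finset.mul_sum]
        exact Finset.sum_congr rfl fun k _ => by ring
      rw [e1, hBdj i]; ring
    rw [hid]
    exact Ideal.sum_mem _ fun k _ => Ideal.mul_mem_left _ _ (hMmem k)
  constructor
  · intro i
    refine ⟨eA * h i, hzA i, ?_⟩
    have : ((eA * h i : 𝓞 K) : K) = (eA : K) * (h i : K) := by push_cast; ring
    rw [this, ← mul_assoc, inv_mul_cancel₀ heAK, one_mul]
  · intro i
    refine ⟨gact K τ.symm ((2 * (δ * (Matrix.of b).det)) * gact K τ (h (Fin.castLE hmn i))),
      Ideal.mem_map_of_mem _ (hzB i), ?_⟩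
    have e1 : gact K τ.symm ((2 * (δ * (Matrix.of b).det)) * gact K τ (h (Fin.castLE hmn i)))
        = eB * h (Fin.castLE hmn i) := by
      rw [map_mul, hginv, heB]
    rw [e1]
    have : ((eB * h (Fin.castLE hmn i) : 𝓞 K) : K) = (eB : K) * (h (Fin.castLE hmn i) : K) := by
      push_cast; ring
    rw [this, ← mul_assoc, inv_mul_cancel₀ heBK, one_mul]
end
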